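/- arXiv:1704.00327 — 2 statements merged into one kernel-verified Lean document; each statement's English description precedes it below -/
import Mathlib

section
/- Fix q_d ∈ S². Let q : (−δ, δ) → S² be a differentiable curve with q(0) = q₀, q′(0) = v, and ⟨q_d, q₀⟩ > −1. Then the derivative at t = 0 of the function t ↦ Ψ(q(t), q_d) equals ⟨e_q(q₀, q_d), v⟩. In particular, the differential of Ψ in its first argument along the tangent space T_{q₀}S² is represented by the vector e_q(q₀, q_d) = (1/(√2·√(1 + ⟨q_d, q₀⟩)))·q₀ × (q₀ × q_d). -/
open scoped RealInnerProductSpace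

/-- Cross product on ℝ³ (as `EuclideanSpace ℝ (Fin 3)`). -/
noncomputable def cross (a b : EuclideanSpace ℝ (Fin 3)) : EuclideanSpace ℝ (Fin 3) :=
  WithLp.toLp 2 ![a 1 * b 2 - a 2 * b 1, a 2 * b 0 - a 0 * b 2, a 0 * b 1 - a 1 * b 0]

/-- Reduced-attitude error function Ψ(q, q_d) = 2 − √2·√(1 + ⟨q_d, q⟩). -/
noncomputable def Psi (q qd : EuclideanSpace ℝ (Fin 3)) : ℝ :=
  2 - Real.sqrt 2 * Real.sqrt (1 + ⟪qd, q⟫)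

/-- Reduced-attitude error vector e_q(q, q_d). -/
noncomputable def eVec (q qd : EuclideanSpace ℝ (Fin 3)) : EuclideanSpace ℝ (Fin 3) :=
  (1 / (Real.sqrt 2 * Real.sqrt (1 + ⟪qd, q⟫))) • cross q (cross q qd)

/-!
The chain rule through `√` gives `d/dt Ψ(q(t), q_d) = -⟪q_d, q'⟫ / (√2 √(1 + ⟪q_d, q⟫))`.
For a unit vector `q`, the triple product expansion `q × (q × q_d) = ⟪q, q_d⟫ q - q_d` shows that
`e_q` differs from `-q_d / (√2 √(1 + ⟪q_d, q⟫))` by a multiple of `q`, and `q` is orthogonal to the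
velocity of any curve on the sphere.
-/

open Filter Topology
open scoped Matrix

theorem cross_eq_toLp_crossProduct (a b : EuclideanSpace ℝ (Fin 3)) :
    cross a b = WithLp.toLp 2 (a.ofLp ⨯₃ b.ofLp) := by
  rw [cross_apply]
  rfl

theorem cross_cross_eq_inner_smul_sub (a b c : EuclideanSpace ℝ (Fin 3)) :
    cross a (cross b c) = ⟪a, c⟫ • b - ⟪a, b⟫ • c := by
  rw [cross_eq_toLp_crossProduct, cross_eq_toLp_crossProduct, WithLp.ofLp_toLp,
    cross_cross_eq_smul_sub_smul', real_inner_comm, EuclideanSpace.inner_eq_star_dotProduct,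
    EuclideanSpace.inner_eq_star_dotProduct]
  simp only [WithLp.toLp_sub, WithLp.toLp_smul, WithLp.toLp_ofLp, star_trivial]

theorem HasDerivAt.inner_eq_zero_of_eventually_norm_eq {E : Type*} [NormedAddCommGroup E]
    [InnerProductSpace ℝ E] {q : ℝ → E} {v : E} {t r : ℝ} (hq : HasDerivAt q v t)
    (hr : ∀ᶠ s in 𝓝 t, ‖q s‖ = r) : ⟪q t, v⟫ = 0 := by
  have hconst : HasDerivAt (‖q ·‖ ^ 2) 0 t :=
    (hasDerivAt_const t (r ^ 2)).congr_of_eventuallyEq (hr.mono fun s hs => by simp [hs])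
  linarith [hq.norm_sq.unique hconst]

theorem HasDerivAt.psi {q : ℝ → EuclideanSpace ℝ (Fin 3)} {v : EuclideanSpace ℝ (Fin 3)} {t : ℝ}
    (qd : EuclideanSpace ℝ (Fin 3)) (hq : HasDerivAt q v t) (h : 1 + ⟪qd, q t⟫ ≠ 0) :
    HasDerivAt (fun s => Psi (q s) qd) (-⟪qd, v⟫ / (√2 * √(1 + ⟪qd, q t⟫))) t := by
  have hsqrt := (((hasDerivAt_const t qd).inner ℝ hq).const_add 1).sqrt h
  refine ((hsqrt.const_mul √2).const_sub 2).congr_deriv ?_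
  rw [inner_zero_left, add_zero]
  field_simp
  rw [Real.sq_sqrt zero_le_two]
  ring

theorem inner_eVec_of_inner_eq_zero {q qd v : EuclideanSpace ℝ (Fin 3)} (hq : ‖q‖ = 1)
    (hv : ⟪q, v⟫ = 0) : ⟪eVec q qd, v⟫ = -⟪qd, v⟫ / (√2 * √(1 + ⟪qd, q⟫)) := by
  rw [eVec, real_inner_smul_left, cross_cross_eq_inner_smul_sub, inner_sub_left,
    real_inner_smul_left, real_inner_smul_left, hv, real_inner_self_eq_norm_sq, hq]
  ring

theorem deriv_psi_eq_inner_eVec_general (qd : EuclideanSpace ℝ (Fin 3))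
    (δ : ℝ) (hδ : 0 < δ) (q : ℝ → EuclideanSpace ℝ (Fin 3))
    (hsphere : ∀ t ∈ Set.Ioo (-δ) δ, ‖q t‖ = 1)
    (q₀ v : EuclideanSpace ℝ (Fin 3)) (hq0 : q 0 = q₀)
    (hv : HasDerivAt q v 0) (h : ⟪qd, q₀⟫ > -1) :
    HasDerivAt (fun t => Psi (q t) qd) ⟪eVec q₀ qd, v⟫ 0 := by
  subst hq0
  have hnhds : Set.Ioo (-δ) δ ∈ 𝓝 (0 : ℝ) := Ioo_mem_nhds (neg_neg_iff_pos.mpr hδ) hδ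
  have htangent : ⟪q 0, v⟫ = 0 :=
    hv.inner_eq_zero_of_eventually_norm_eq (eventually_of_mem hnhds hsphere)
  rw [inner_eVec_of_inner_eq_zero (hsphere 0 (mem_of_mem_nhds hnhds)) htangent]
  exact hv.psi qd (by linarith)

/-- The derivative at t = 0 of t ↦ Ψ(q(t), q_d) along a differentiable curve `q` in S²
through `q₀` with velocity `v` equals ⟨e_q(q₀, q_d), v⟩; that is, the differential of Ψ
in its first argument on T_{q₀}S² is represented by the vector e_q(q₀, q_d). -/
theorem deriv_psi_eq_inner_eVec (qd : EuclideanSpace ℝ (Fin 3)) (hqd : ‖qd‖ = 1)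
    (δ : ℝ) (hδ : 0 < δ) (q : ℝ → EuclideanSpace ℝ (Fin 3))
    (hsphere : ∀ t ∈ Set.Ioo (-δ) δ, ‖q t‖ = 1)
    (hdiff : ∀ t ∈ Set.Ioo (-δ) δ, DifferentiableAt ℝ q t)
    (q₀ v : EuclideanSpace ℝ (Fin 3)) (hq0 : q 0 = q₀)
    (hv : HasDerivAt q v 0) (h : ⟪qd, q₀⟫ > -1) :
    HasDerivAt (fun t => Psi (q t) qd) ⟪eVec q₀ qd, v⟫ 0 :=
  deriv_psi_eq_inner_eVec_general qd δ hδ q hsphere q₀ v hq0 hv h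
end

section
/- Let q, q_d : I → S² be differentiable curves on an interval I with ⟨q_d(t), q(t)⟩ > −1 for all t ∈ I. Then for all t ∈ I, (d/dt) Ψ(q(t), q_d(t)) = ⟨e_q(q(t), q_d(t)), q̇(t) − 𝒯(q(t), q_d(t))·q̇_d(t)⟩; i.e., the time derivative of the reduced-attitude error function equals the inner product of the reduced-attitude error vector with the velocity error e_{q̇} := q̇ − 𝒯(q, q_d)·q̇_d. -/
open scoped RealInnerProductSpace

/-- Transport map 𝒯(q, q_d)·v = (q_d × v) × q. -/
noncomputable def transport (q qd v : EuclideanSpace ℝ (Fin 3)) : EuclideanSpace ℝ (Fin 3) :=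
  cross (cross qd v) q

/-!
The chain rule gives `d/dt Ψ = -(⟪q_d, q̇⟫ + ⟪q̇_d, q⟫) / (√2 √(1 + ⟪q_d, q⟫))`. Expanding both
double cross products by the BAC–CAB rule, and using `‖q‖ = ‖q_d‖ = 1` together with the
tangency `⟪q, q̇⟫ = ⟪q_d, q̇_d⟫ = 0`, the inner product `⟪q × (q × q_d), q̇ - 𝒯 q̇_d⟫` collapses to
the same numerator `-(⟪q_d, q̇⟫ + ⟪q̇_d, q⟫)`.
-/

lemma cross_eq_crossProduct (a b : EuclideanSpace ℝ (Fin 3)) :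
    cross a b = WithLp.toLp 2 (crossProduct a.ofLp b.ofLp) := rfl

lemma real_inner_eq_ofLp_dotProduct {ι : Type*} [Fintype ι] (a b : EuclideanSpace ℝ ι) :
    ⟪a, b⟫ = a.ofLp ⬝ᵥ b.ofLp := by
  simp [EuclideanSpace.inner_eq_star_dotProduct, dotProduct_comm]

lemma cross_cross_eq_inner_smul_sub_inner_smul (a b c : EuclideanSpace ℝ (Fin 3)) :
    cross (cross a b) c = ⟪a, c⟫ • b - ⟪b, c⟫ • a := by
  simp only [cross_eq_crossProduct, real_inner_eq_ofLp_dotProduct, cross_cross_eq_smul_sub_smul]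
  rfl

lemma cross_cross_eq_inner_smul_sub_inner_smul' (a b c : EuclideanSpace ℝ (Fin 3)) :
    cross a (cross b c) = ⟪a, c⟫ • b - ⟪b, a⟫ • c := by
  simp only [cross_eq_crossProduct, real_inner_eq_ofLp_dotProduct, cross_cross_eq_smul_sub_smul']
  rfl

lemma inner_cross_cross_sub_transport {q qd p d : EuclideanSpace ℝ (Fin 3)}
    (hq : ‖q‖ = 1) (hqd : ‖qd‖ = 1) (hp : ⟪q, p⟫ = 0) (hd : ⟪qd, d⟫ = 0) :
    ⟪cross q (cross q qd), p - transport q qd d⟫ = -(⟪qd, p⟫ + ⟪d, q⟫) := by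
  have hqq : ⟪q, q⟫ = 1 := by simp [hq]
  have hqdqd : ⟪qd, qd⟫ = 1 := by simp [hqd]
  simp only [transport, cross_cross_eq_inner_smul_sub_inner_smul',
    cross_cross_eq_inner_smul_sub_inner_smul, inner_sub_left, inner_sub_right,
    real_inner_smul_left, real_inner_smul_right, hqq, hqdqd, hp, hd, real_inner_comm q]
  ring

lemma HasDerivAt.inner_eq_zero_of_eventually_norm_eq_s4 {E : Type*} [NormedAddCommGroup E]
    [InnerProductSpace ℝ E] {f : ℝ → E} {f' : E} {t c : ℝ} (hf : HasDerivAt f f' t)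
    (hc : ∀ᶠ s in nhds t, ‖f s‖ = c) :
    ⟪f t, f'⟫ = 0 := by
  have hderiv : HasDerivAt (fun s => ⟪f s, f s⟫) (2 * ⟪f t, f'⟫) t := by
    simpa [real_inner_comm f', two_mul] using hf.inner ℝ hf
  have hconst : HasDerivAt (fun s => ⟪f s, f s⟫) 0 t :=
    (hasDerivAt_const t (c ^ 2)).congr_of_eventuallyEq <| hc.mono fun s hs => by
      simp [hs]
  linarith [hderiv.unique hconst]

lemma hasDerivAt_psi {q qd : ℝ → EuclideanSpace ℝ (Fin 3)} {q' qd' : EuclideanSpace ℝ (Fin 3)}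
    {t : ℝ} (hq : HasDerivAt q q' t) (hqd : HasDerivAt qd qd' t) (hang : -1 < ⟪qd t, q t⟫) :
    HasDerivAt (fun s => Psi (q s) (qd s))
      (1 / (Real.sqrt 2 * Real.sqrt (1 + ⟪qd t, q t⟫)) * -(⟪qd t, q'⟫ + ⟪qd', q t⟫)) t := by
  have hpos : 0 < 1 + ⟪qd t, q t⟫ := by linarith
  have hsqrt := (Real.hasDerivAt_sqrt hpos.ne').comp t ((hqd.inner ℝ hq).const_add 1)
  refine ((hsqrt.const_mul (Real.sqrt 2)).const_sub 2).congr_deriv ?_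
  have hu : 0 < Real.sqrt (1 + ⟪qd t, q t⟫) := Real.sqrt_pos.2 hpos
  have h2 : Real.sqrt 2 ^ 2 = 2 := Real.sq_sqrt zero_le_two
  field_simp
  rw [h2]

/-- The time derivative of the reduced-attitude error function along differentiable
curves q, q_d in S² equals ⟨e_q, e_{q̇}⟩ where e_{q̇} = q̇ − 𝒯(q,q_d)·q̇_d. -/
theorem deriv_psi_eq_inner_velocity_error
    (I : Set ℝ) (hI : IsOpen I)
    (q qd q' qd' : ℝ → EuclideanSpace ℝ (Fin 3))
    (hq : ∀ t ∈ I, ‖q t‖ = 1) (hqd : ∀ t ∈ I, ‖qd t‖ = 1)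
    (hq' : ∀ t ∈ I, HasDerivAt q (q' t) t)
    (hqd' : ∀ t ∈ I, HasDerivAt qd (qd' t) t)
    (hang : ∀ t ∈ I, ⟪qd t, q t⟫ > -1) :
    ∀ t ∈ I,
      HasDerivAt (fun s => Psi (q s) (qd s))
        ⟪eVec (q t) (qd t), q' t - transport (q t) (qd t) (qd' t)⟫ t := by
  intro t ht
  have hI_nhds : ∀ᶠ s in nhds t, s ∈ I := hI.mem_nhds ht
  have hq_tangent : ⟪q t, q' t⟫ = 0 :=
    (hq' t ht).inner_eq_zero_of_eventually_norm_eq_s4 (hI_nhds.mono hq)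
  have hqd_tangent : ⟪qd t, qd' t⟫ = 0 :=
    (hqd' t ht).inner_eq_zero_of_eventually_norm_eq_s4 (hI_nhds.mono hqd)
  rw [eVec, real_inner_smul_left,
    inner_cross_cross_sub_transport (hq t ht) (hqd t ht) hq_tangent hqd_tangent]
  exact hasDerivAt_psi (hq' t ht) (hqd' t ht) (hang t ht)
end
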